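/- arXiv:math/9412219 — 5 statements merged into one kernel-verified Lean document; each statement's English description precedes it below -/
import Mathlib

section
/- Let X be a real Banach space, F a norming subspace of X*, and σ the σ(X,F) topology. Let K ⊆ X be a σ-closed, norm-bounded, convex set, and for λ > 0 let K_λ denote the σ-closure of K + λB(X), where B(X) is the closed unit ball of X. If K_λ is admissible for every λ > 0, then K is admissible. -/
/-!
Suppose `x` lies in every closed ball containing `K` but `x ∉ K`. Since `K` is σ-closed and
convex, Hahn–Banach in the locally convex space `(X, σ)` gives a σ-continuous functional `f`
with `f < u` on `K` and `u < f x`. Then `f ≤ u + ‖f‖ λ` on `K + λ B(X)`, hence on its σ-closure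
`K_λ`, and choosing `‖f‖ λ < f x - u` puts `x` outside `K_λ`. But `K ⊆ K_λ`, so every closed
ball containing `K_λ` contains `K` and thus `x`; admissibility of `K_λ` gives `x ∈ K_λ`.
-/

open Metric Set Pointwise

/-- A set is admissible if it is the intersection of all closed balls containing it. -/
def Admissible {X : Type*} [NormedAddCommGroup X] (K : Set X) : Prop :=
  K = ⋂ p ∈ {p : X × ℝ | K ⊆ closedBall p.1 p.2}, closedBall p.1 p.2

/-- The `σ(X,F)` topology on `X`: the topology induced by the functionals in `F`. -/
def sigmaTop {X : Type*} [NormedAddCommGroup X] [NormedSpace ℝ X]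
    (F : Submodule ℝ (X →L[ℝ] ℝ)) : TopologicalSpace X :=
  TopologicalSpace.induced (fun x => fun f : F => (f : X →L[ℝ] ℝ) x) inferInstance

/-- `F` is a norming subspace of `X*`: `‖x‖ = sup {|f x| : f ∈ F, ‖f‖ ≤ 1}`. -/
def IsNorming {X : Type*} [NormedAddCommGroup X] [NormedSpace ℝ X]
    (F : Submodule ℝ (X →L[ℝ] ℝ)) : Prop :=
  ∀ x : X, ‖x‖ = sSup {r : ℝ | ∃ f ∈ F, ‖f‖ ≤ 1 ∧ r = |f x|}

open Topology

section

variable {X : Type*} [NormedAddCommGroup X]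

def ballHull (K : Set X) : Set X :=
  ⋂ p ∈ {p : X × ℝ | K ⊆ closedBall p.1 p.2}, closedBall p.1 p.2

theorem subset_ballHull (K : Set X) : K ⊆ ballHull K := by
  simp only [ballHull, subset_iInter_iff, mem_ofPred_eq]
  exact fun _ hp => hp

theorem ballHull_mono {K L : Set X} (hKL : K ⊆ L) : ballHull K ⊆ ballHull L := by
  simp only [ballHull, subset_iInter_iff, mem_ofPred_eq]
  exact fun p hp => biInter_subset_of_mem (hKL.trans hp)

theorem admissible_iff_ballHull_subset {K : Set X} : Admissible K ↔ ballHull K ⊆ K :=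
  ⟨fun h => h.symm.subset, fun h => (subset_ballHull K).antisymm h⟩

theorem Admissible.ballHull_subset {K L : Set X} (hL : Admissible L) (hKL : K ⊆ L) :
    ballHull K ⊆ L :=
  (ballHull_mono hKL).trans (admissible_iff_ballHull_subset.1 hL)

section Sigma

variable [NormedSpace ℝ X] (F : Submodule ℝ (X →L[ℝ] ℝ))

/-- `WeakBilin (sigmaPairing F)` is `X` with the topology `sigmaTop F`, definitionally. -/
abbrev sigmaPairing : X →ₗ[ℝ] F →ₗ[ℝ] ℝ :=
  (topDualPairing ℝ X).flip.compl₂ F.subtype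

theorem norm_topology_le_sigmaTop : (inferInstance : TopologicalSpace X) ≤ sigmaTop F :=
  continuous_iff_le_induced.1 (continuous_pi fun g : F => (g : X →L[ℝ] ℝ).continuous)

theorem exists_sigma_continuous_separation {K : Set X} (hKc : IsClosed[sigmaTop F] K)
    (hKconv : Convex ℝ K) {x : X} (hx : x ∉ K) :
    ∃ f : X →L[ℝ] ℝ, Continuous[sigmaTop F, _] f ∧ ∃ u, (∀ a ∈ K, f a < u) ∧ u < f x := by
  let B := sigmaPairing F
  -- These instances must be given explicitly: `B`'s type carries the submodule's own
  -- `AddCommMonoid` structure, which instance search does not unfold to `AddCommGroup`'s.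
  have : IsTopologicalAddGroup (WeakBilin B) :=
    @WeakBilin.instIsTopologicalAddGroup ℝ X F _ _ _ _ _ _ B _
  have : LocallyConvexSpace ℝ (WeakBilin B) :=
    @WeakBilin.locallyConvexSpace ℝ X F _ _ _ _ _ _ _ _ B
  have hKc' : IsClosed (show Set (WeakBilin B) from K) := hKc
  have hKconv' : Convex ℝ (show Set (WeakBilin B) from K) := hKconv
  obtain ⟨f, u, hKu, hux⟩ := geometric_hahn_banach_closed_point hKconv' hKc' hx
  exact ⟨⟨f.toLinearMap, continuous_le_dom (norm_topology_le_sigmaTop F) f.continuous⟩,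
    f.continuous, u, hKu, hux⟩

theorem sigmaClosure_add_closedBall_subset {K : Set X} {f : X →L[ℝ] ℝ}
    (hf : Continuous[sigmaTop F, _] f) {u : ℝ} (hKu : ∀ a ∈ K, f a ≤ u) (l : ℝ) :
    closure[sigmaTop F] (K + closedBall 0 l) ⊆ f ⁻¹' Iic (u + ‖f‖ * l) := by
  refine @closure_minimal X (sigmaTop F) _ _ ?_ (@IsClosed.preimage X ℝ (sigmaTop F) _ f hf _
    isClosed_Iic)
  rintro _ ⟨a, ha, b, hb, rfl⟩
  have hfb : f b ≤ ‖f‖ * l := calc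
    f b ≤ ‖f b‖ := le_abs_self _
    _ ≤ ‖f‖ * ‖b‖ := f.le_opNorm b
    _ ≤ ‖f‖ * l := by gcongr; exact mem_closedBall_zero_iff.1 hb
  simp only [mem_preimage, mem_Iic, map_add]
  linarith [hKu a ha]

end Sigma

end

theorem stmt_0_general {X : Type*} [NormedAddCommGroup X] [NormedSpace ℝ X]
    (F : Submodule ℝ (X →L[ℝ] ℝ))
    (K : Set X) (hKc : @IsClosed X (sigmaTop F) K)
    (hKconv : Convex ℝ K)
    (h : ∀ l : ℝ, 0 < l → Admissible (@closure X (sigmaTop F) (K + closedBall (0 : X) l))) :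
    Admissible K := by
  refine admissible_iff_ballHull_subset.2 fun x hx => ?_
  by_contra hxK
  obtain ⟨f, hf, u, hKu, hux⟩ := exists_sigma_continuous_separation F hKc hKconv hxK
  obtain ⟨l, hl, hfl⟩ := exists_pos_mul_lt (sub_pos.2 hux) ‖f‖
  have hK_sub : K ⊆ closure[sigmaTop F] (K + closedBall 0 l) :=
    (subset_add_left K (mem_closedBall_self hl.le)).trans (@subset_closure X (sigmaTop F) _)
  have hx_mem := (h l hl).ballHull_subset hK_sub hx
  have hfx : f x ≤ u + ‖f‖ * l :=
    sigmaClosure_add_closedBall_subset F hf (fun a ha => (hKu a ha).le) l hx_mem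
  linarith

/-- Lemma 1 (Lemma IntMIP): if `K_λ` (the σ-closure of `K + λ B(X)`) is admissible for
every `λ > 0`, then the σ-closed bounded convex set `K` is admissible. -/
theorem stmt_0 {X : Type*} [NormedAddCommGroup X] [NormedSpace ℝ X] [CompleteSpace X]
    (F : Submodule ℝ (X →L[ℝ] ℝ)) (hF : IsNorming F)
    (K : Set X) (hKc : @IsClosed X (sigmaTop F) K)
    (hKb : Bornology.IsBounded K) (hKconv : Convex ℝ K)
    (h : ∀ l : ℝ, 0 < l → Admissible (@closure X (sigmaTop F) (K + closedBall (0 : X) l))) :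
    Admissible K :=
  stmt_0_general F K hKc hKconv h
end

section
/- Let X be a real Banach space, F a norming subspace of X*, and σ the σ(X,F) topology. If X has the F-MIP, then every nonempty σ-closed, norm-bounded, convex set K ⊆ X that has Property (R) is equal to the σ-closed convex hull of its set of farthest points b(K). -/
open Metric Set Pointwise

/-- The farthest distance map `r_K(x) = sup {‖z - x‖ : z ∈ K}`. -/
noncomputable def rFar {X : Type*} [NormedAddCommGroup X] (K : Set X) (x : X) : ℝ :=
  sSup ((fun z => ‖z - x‖) '' K)

/-- `Q_K(x)`: the set of points of `K` farthest from `x`. -/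
def QFar {X : Type*} [NormedAddCommGroup X] (K : Set X) (x : X) : Set X :=
  {z ∈ K | ‖z - x‖ = rFar K x}

/-- `D(K)`: the set of points admitting a farthest point in `K`. -/
def DFar {X : Type*} [NormedAddCommGroup X] (K : Set X) : Set X :=
  {x | (QFar K x).Nonempty}

/-- `b(K)`: the set of farthest points of `K`. -/
def farPoints {X : Type*} [NormedAddCommGroup X] (K : Set X) : Set X :=
  ⋃ x ∈ DFar K, QFar K x

/-- The crescent `C(K, x, α) = {z ∈ K : ‖z - x‖ > r_K(x) - α}`. -/
def crescent {X : Type*} [NormedAddCommGroup X] (K : Set X) (x : X) (α : ℝ) : Set X :=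
  {z ∈ K | rFar K x - α < ‖z - x‖}

/-- Property (R): every crescent of `K` contains a farthest point of `K`. -/
def PropR {X : Type*} [NormedAddCommGroup X] (K : Set X) : Prop :=
  ∀ (x : X) (α : ℝ), 0 < α → ∃ z ∈ crescent K x α, z ∈ farPoints K

/-! Let `M` be the σ-closed convex hull of `b(K)`. Since `K` is σ-closed and convex, `M ⊆ K`, so
`M` is bounded and the `F`-MIP makes it admissible. A closed ball `B(p, r)` containing `M` contains
`b(K)`, and then also `K`: a point of `K` outside it would force `r < r_K(p)`, and the crescent
`C(K, p, r_K(p) - r)` would contain a farthest point outside `B(p, r)`. Hence `K ⊆ M`. -/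

theorem Convex.closure_sigmaTop {X : Type*} [NormedAddCommGroup X] [NormedSpace ℝ X]
    (F : Submodule ℝ (X →L[ℝ] ℝ)) {s : Set X} (hs : Convex ℝ s) :
    Convex ℝ (@closure X (sigmaTop F) s) := by
  let ev : X →ₗ[ℝ] (F → ℝ) := LinearMap.pi fun f : F => f.1.toLinearMap
  have : @IsTopologicalAddGroup X (sigmaTop F) _ := topologicalAddGroup_induced ev
  have : @ContinuousSMul ℝ X _ _ (sigmaTop F) := continuousSMul_induced ev
  let := sigmaTop F
  exact hs.closure

section FarthestPoints

variable {X : Type*} [NormedAddCommGroup X] {K : Set X}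

theorem farPoints_subset : farPoints K ⊆ K := by
  intro z hz
  obtain ⟨x, -, hzx⟩ := mem_iUnion₂.1 hz
  exact hzx.1

theorem norm_sub_le_rFar (hK : Bornology.IsBounded K) {x z : X} (hz : z ∈ K) :
    ‖z - x‖ ≤ rFar K x := by
  obtain ⟨R, hKR⟩ := hK.subset_closedBall x
  refine le_csSup ⟨R, ?_⟩ ⟨z, hz, rfl⟩
  rintro _ ⟨w, hw, rfl⟩
  simpa [dist_eq_norm] using hKR hw

theorem PropR.subset_closedBall (hR : PropR K) (hK : Bornology.IsBounded K) {p : X} {r : ℝ}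
    (hfar : farPoints K ⊆ closedBall p r) : K ⊆ closedBall p r := by
  intro z hz
  by_contra hzr
  rw [mem_closedBall, dist_eq_norm, not_le] at hzr
  have hr : r < rFar K p := hzr.trans_le (norm_sub_le_rFar hK hz)
  obtain ⟨w, ⟨-, hw⟩, hwfar⟩ := hR p (rFar K p - r) (sub_pos.2 hr)
  have hwr := hfar hwfar
  rw [mem_closedBall, dist_eq_norm] at hwr
  linarith

theorem Admissible.subset_of_forall_closedBall {M : Set X} (hM : Admissible M)
    (h : ∀ p r, M ⊆ closedBall p r → K ⊆ closedBall p r) : K ⊆ M := by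
  rw [hM]
  exact subset_iInter₂ fun p hp => h p.1 p.2 hp

end FarthestPoints

theorem stmt_3_general {X : Type*} [NormedAddCommGroup X] [NormedSpace ℝ X]
    (F : Submodule ℝ (X →L[ℝ] ℝ))
    (hMIP : ∀ K : Set X, @IsClosed X (sigmaTop F) K → Bornology.IsBounded K → Convex ℝ K →
      Admissible K)
    (K : Set X) (hKc : @IsClosed X (sigmaTop F) K)
    (hKb : Bornology.IsBounded K) (hKconv : Convex ℝ K) (hR : PropR K) :
    K = @closure X (sigmaTop F) (convexHull ℝ (farPoints K)) := by
  let := sigmaTop F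
  set M := closure (convexHull ℝ (farPoints K))
  have hMK : M ⊆ K := closure_minimal (convexHull_min farPoints_subset hKconv) hKc
  have hM : Admissible M :=
    hMIP M isClosed_closure (hKb.subset hMK) ((convex_convexHull ℝ _).closure_sigmaTop F)
  have hfarM : farPoints K ⊆ M := (subset_convexHull ℝ _).trans subset_closure
  exact (hM.subset_of_forall_closedBall fun p r hMr =>
    hR.subset_closedBall hKb (hfarM.trans hMr)).antisymm hMK

/-- Theorem far, (b) ⟹ (a): under the `F`-MIP, a nonempty σ-closed bounded convex set
with Property (R) is the σ-closed convex hull of its farthest points. -/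
theorem stmt_3 {X : Type*} [NormedAddCommGroup X] [NormedSpace ℝ X] [CompleteSpace X]
    (F : Submodule ℝ (X →L[ℝ] ℝ)) (hF : IsNorming F)
    (hMIP : ∀ K : Set X, @IsClosed X (sigmaTop F) K → Bornology.IsBounded K → Convex ℝ K →
      Admissible K)
    (K : Set X) (hne : K.Nonempty) (hKc : @IsClosed X (sigmaTop F) K)
    (hKb : Bornology.IsBounded K) (hKconv : Convex ℝ K) (hR : PropR K) :
    K = @closure X (sigmaTop F) (convexHull ℝ (farPoints K)) :=
  stmt_3_general F hMIP K hKc hKb hKconv hR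
end

section
/- Let K be a nonempty bounded set in a real Banach space X. For every x ∈ X and α > 0 there exists ε > 0 such that for every y ∈ X with ‖x − y‖ < ε there exists β > 0 with C(K, y, β) ⊆ C(K, x, α). -/
open Metric Set Pointwise

lemma rFar_bddAbove {X : Type*} [NormedAddCommGroup X] {K : Set X}
    (hKb : Bornology.IsBounded K) (x : X) : BddAbove ((fun z => ‖z - x‖) '' K) := by
  obtain ⟨C, hC⟩ := hKb.subset_closedBall x
  exact ⟨C, by rintro _ ⟨z, hz, rfl⟩; simpa [dist_eq_norm] using hC hz⟩

lemma rFar_lipschitz {X : Type*} [NormedAddCommGroup X] {K : Set X} (hne : K.Nonempty)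
    (hKb : Bornology.IsBounded K) (x y : X) : rFar K x ≤ rFar K y + ‖x - y‖ := by
  apply Real.sSup_le
  · rintro _ ⟨z, hz, rfl⟩
    have h1 : ‖z - y‖ ≤ rFar K y := le_csSup (rFar_bddAbove hKb y) ⟨z, hz, rfl⟩
    have : ‖z - x‖ ≤ ‖z - y‖ + ‖y - x‖ := by
      simpa using norm_sub_le_norm_sub_add_norm_sub z y x
    rw [show ‖x - y‖ = ‖y - x‖ from norm_sub_rev x y]
    linarith
  · obtain ⟨z, hz⟩ := hne
    have h1 : ‖z - y‖ ≤ rFar K y := le_csSup (rFar_bddAbove hKb y) ⟨z, hz, rfl⟩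
    linarith [norm_nonneg (z - y), norm_nonneg (x - y)]

/-- Lemma open: crescents shrink under small perturbation of the center. -/
theorem stmt_5 {X : Type*} [NormedAddCommGroup X] [NormedSpace ℝ X] [CompleteSpace X]
    (K : Set X) (hne : K.Nonempty) (hKb : Bornology.IsBounded K)
    (x : X) (α : ℝ) (hα : 0 < α) :
    ∃ ε > 0, ∀ y : X, ‖x - y‖ < ε → ∃ β > 0, crescent K y β ⊆ crescent K x α := by
  refine ⟨α / 4, by linarith, fun y hy => ⟨α / 4, by linarith, fun z hz => ?_⟩⟩
  obtain ⟨hzK, hz2⟩ := hz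
  refine ⟨hzK, ?_⟩
  have h1 : rFar K x ≤ rFar K y + ‖x - y‖ := rFar_lipschitz hne hKb x y
  have h3 : ‖z - x‖ ≥ ‖z - y‖ - ‖y - x‖ := by
    have := norm_sub_le_norm_sub_add_norm_sub z x y
    linarith [norm_sub_rev y x ▸ this]
  have hxy : ‖x - y‖ < α / 4 := hy
  have hyx : ‖y - x‖ < α / 4 := by rwa [norm_sub_rev] at hy
  linarith
end

section
/- Let Y be a real Banach space and X* = Y* its dual (more generally, let X* be the dual of a Banach space). Then X* has the IP_{f,∞}: every family of closed balls in X* with empty intersection contains a finite subfamily with empty intersection. -/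
/-!
By Banach–Alaoglu, closed balls of a dual space are compact and closed in the weak* topology. A
family of closed sets with empty intersection, one of which is compact, already has a finite
subfamily with empty intersection.
-/

open Metric Set

theorem IsCompact.exists_finset_biInter_eq_empty {α ι : Type*} [TopologicalSpace α]
    {B : Set ι} {Z : ι → Set α} (hZ : ∀ i ∈ B, IsClosed (Z i)) {i₀ : ι} (hi₀ : i₀ ∈ B)
    (hc : IsCompact (Z i₀)) (h : ⋂ i ∈ B, Z i = ∅) :
    ∃ s : Finset ι, ↑s ⊆ B ∧ ⋂ i ∈ s, Z i = ∅ := by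
  classical
  obtain ⟨t, ht⟩ := hc.elim_finite_subfamily_closed (fun i : B => Z i) (fun i => hZ i i.2)
    (by rw [← biInter_eq_iInter (t := fun i _ => Z i), h, inter_empty])
  refine ⟨insert i₀ (t.map (Function.Embedding.subtype _)), ?_, ?_⟩
  · simp [insert_subset_iff, hi₀]
  · simpa [Finset.set_biInter_insert] using ht

theorem StrongDual.exists_finset_biInter_closedBall_eq_empty {𝕜 E : Type*}
    [NontriviallyNormedField 𝕜] [ProperSpace 𝕜] [SeminormedAddCommGroup E] [NormedSpace 𝕜 E]
    {B : Set (StrongDual 𝕜 E × ℝ)} (hB : ⋂ p ∈ B, closedBall p.1 p.2 = ∅) :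
    ∃ s : Finset (StrongDual 𝕜 E × ℝ), ↑s ⊆ B ∧ ⋂ p ∈ s, closedBall p.1 p.2 = ∅ := by
  obtain ⟨p₀, hp₀⟩ : B.Nonempty := by
    by_contra! hempty
    simp [hempty] at hB
  obtain ⟨s, hsB, hs⟩ := IsCompact.exists_finset_biInter_eq_empty
    (fun p _ => WeakDual.isClosed_closedBall p.1 p.2) hp₀
    (WeakDual.isCompact_closedBall p₀.1 p₀.2) (by rw [← preimage_iInter₂, hB, preimage_empty])
  refine ⟨s, hsB, WeakDual.toStrongDual.surjective.preimage_injective ?_⟩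
  rwa [preimage_empty, preimage_iInter₂]

theorem stmt_11_general {X : Type*} [NormedAddCommGroup X] [NormedSpace ℝ X] :
    ∀ B : Set ((X →L[ℝ] ℝ) × ℝ), (⋂ p ∈ B, closedBall p.1 p.2) = ∅ →
      ∃ s : Finset ((X →L[ℝ] ℝ) × ℝ), ↑s ⊆ B ∧ (⋂ p ∈ s, closedBall p.1 p.2) = ∅ :=
  fun _ => StrongDual.exists_finset_biInter_closedBall_eq_empty

/-- Any dual Banach space has the IP_{f,∞}: every family of closed balls in `X*` with empty
intersection contains a finite subfamily with empty intersection. -/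
theorem stmt_11 {X : Type*} [NormedAddCommGroup X] [NormedSpace ℝ X] [CompleteSpace X] :
    ∀ B : Set ((X →L[ℝ] ℝ) × ℝ), (⋂ p ∈ B, closedBall p.1 p.2) = ∅ →
      ∃ s : Finset ((X →L[ℝ] ℝ) × ℝ), ↑s ⊆ B ∧ (⋂ p ∈ s, closedBall p.1 p.2) = ∅ :=
  stmt_11_general
end

section
/- Let X be a real Banach space in which every norm-compact convex set is admissible (i.e., is the intersection of all closed balls containing it). Then every nonempty norm-compact convex set in X is the norm-closed convex hull of its set of farthest points. -/
open Metric Set Pointwise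

/-- If every norm-compact convex set in `X` is admissible, then every nonempty norm-compact
convex set is the closed convex hull of its farthest points. -/
theorem stmt_18 {X : Type*} [NormedAddCommGroup X] [NormedSpace ℝ X] [CompleteSpace X]
    (h : ∀ K : Set X, IsCompact K → Convex ℝ K → Admissible K) :
    ∀ K : Set X, IsCompact K → Convex ℝ K → K.Nonempty →
      K = closure (convexHull ℝ (farPoints K)) := by
  intro K hK hconv hne
  set M := closure (convexHull ℝ (farPoints K)) with hMdef
  have hfarK : farPoints K ⊆ K := by
    intro z hz
    simp only [farPoints, mem_iUnion] at hz
    obtain ⟨x, -, hz⟩ := hz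
    exact hz.1
  have hMK : M ⊆ K :=
    closure_minimal (convexHull_min hfarK hconv) hK.isClosed
  have hMcompact : IsCompact M := hK.of_isClosed_subset isClosed_closure hMK
  have hMconv : Convex ℝ M := (convex_convexHull ℝ _).closure
  have hadm := h M hMcompact hMconv
  refine Subset.antisymm ?_ hMK
  intro z hz
  rw [hadm]
  simp only [mem_iInter, mem_setOf_eq]
  intro p hp
  obtain ⟨z₀, hz₀K, hz₀max⟩ := hK.exists_isMaxOn hne
    ((continuous_norm.comp (continuous_id.sub continuous_const)).continuousOn
      (s := K) : ContinuousOn (fun w => ‖w - p.1‖) K)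
  have hgreat : IsGreatest ((fun w => ‖w - p.1‖) '' K) ‖z₀ - p.1‖ :=
    ⟨mem_image_of_mem _ hz₀K, by rintro _ ⟨w, hw, rfl⟩; exact hz₀max hw⟩
  have hr : rFar K p.1 = ‖z₀ - p.1‖ := hgreat.csSup_eq
  have hz₀Q : z₀ ∈ QFar K p.1 := ⟨hz₀K, hr.symm⟩
  have hz₀far : z₀ ∈ farPoints K := mem_iUnion₂.mpr ⟨p.1, ⟨z₀, hz₀Q⟩, hz₀Q⟩
  have hz₀M : z₀ ∈ M := subset_closure (subset_convexHull ℝ _ hz₀far)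
  have hball := hp hz₀M
  rw [mem_closedBall, dist_eq_norm] at hball ⊢
  exact le_trans (hz₀max hz) hball
end
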